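/- Let P and Ξ be invertible symmetric p×p real matrices, ψ ∈ (0,1), S = (0_{p×p} : I_p) the p×2p selection matrix, and define the 2p×2p matrices P(ψ) = T ⊗ P and Ξ(ψ) = T ⊗ Ξ where T = [1, 1−ψ; 1−ψ, 1−ψ]. Let F(ψ) = S·P(ψ)⁻¹·Ξ(ψ)·P(ψ)⁻¹·S'. Then F(ψ)⁻¹ = ψ(1−ψ)·P·Ξ⁻¹·P. -/

import Mathlib

open Matrix Kronecker

/-!
Kronecker products multiply blockwise, so the sandwich collapses to `T⁻¹ ⊗ₖ (P⁻¹ Ξ P⁻¹)`,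
and `S` extracts its lower-right block `T⁻¹ 1 1 • P⁻¹ Ξ P⁻¹`.
For a `2 × 2` matrix that entry is `T 0 0 / det T`, here `1 / (ψ (1 - ψ))`.
-/

namespace Matrix

section CommRing

variable {m : Type*} (n R : Type*) [Fintype m] [DecidableEq m] [Fintype n] [DecidableEq n]
  [CommRing R]

def blockSelection (b : m) : Matrix n (m × n) R :=
  of fun i jk => if jk = (b, i) then 1 else 0

variable {n R}

theorem blockSelection_mul_mul_transpose (b : m) (M : Matrix (m × n) (m × n) R) :
    blockSelection n R b * M * (blockSelection n R b)ᵀ = M.submatrix (b, ·) (b, ·) := by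
  ext i j
  simp [blockSelection, mul_apply, ite_mul, mul_ite]

theorem blockSelection_mul_kronecker_mul_transpose (b : m) (A : Matrix m m R)
    (B : Matrix n n R) :
    blockSelection n R b * (A ⊗ₖ B) * (blockSelection n R b)ᵀ = A b b • B := by
  rw [blockSelection_mul_mul_transpose]
  ext i j
  simp [kroneckerMap_apply]

theorem kronecker_inv_mul_kronecker_mul_kronecker_inv {T : Matrix m m R}
    (hT : IsUnit T.det) (P Xi : Matrix n n R) :
    (T ⊗ₖ P)⁻¹ * (T ⊗ₖ Xi) * (T ⊗ₖ P)⁻¹ = T⁻¹ ⊗ₖ (P⁻¹ * Xi * P⁻¹) := by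
  rw [inv_kronecker, ← mul_kronecker_mul, ← mul_kronecker_mul, nonsing_inv_mul _ hT,
    Matrix.one_mul]

end CommRing

variable {n K : Type*} [Fintype n] [DecidableEq n] [Field K]

theorem inv_fin_two_one_one (A : Matrix (Fin 2) (Fin 2) K) : A⁻¹ 1 1 = A.det⁻¹ * A 0 0 := by
  simp [inv_def, adjugate_fin_two, Ring.inverse_eq_inv']

theorem inv_smul_inv_mul_mul_inv {c : K} (hc : c ≠ 0) {P Xi : Matrix n n K}
    (hP : IsUnit P.det) (hXi : IsUnit Xi.det) :
    (c⁻¹ • (P⁻¹ * Xi * P⁻¹))⁻¹ = c • (P * Xi⁻¹ * P) := by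
  have hdet : IsUnit (P⁻¹ * Xi * P⁻¹).det := by
    simpa [det_mul, det_nonsing_inv, hP.ne_zero] using hXi
  let := invertibleOfNonzero (inv_ne_zero hc)
  rw [inv_smul _ c⁻¹ hdet, invOf_eq_inv, inv_inv, mul_inv_rev, mul_inv_rev,
    nonsing_inv_nonsing_inv P hP, Matrix.mul_assoc]

end Matrix

theorem sandwich_variance_closed_form_general {p : ℕ}
    (P Xi : Matrix (Fin p) (Fin p) ℝ)
    (hP : IsUnit P.det) (hXi : IsUnit Xi.det)
    {ψ : ℝ} (hψ : ψ ∈ Set.Ioo (0:ℝ) 1) :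
    let T : Matrix (Fin 2) (Fin 2) ℝ := !![1, 1 - ψ; 1 - ψ, 1 - ψ]
    let S : Matrix (Fin p) (Fin 2 × Fin p) ℝ :=
      Matrix.of fun i jk => if jk = ((1 : Fin 2), i) then 1 else 0
    let F : Matrix (Fin p) (Fin p) ℝ := S * (T ⊗ₖ P)⁻¹ * (T ⊗ₖ Xi) * (T ⊗ₖ P)⁻¹ * Sᵀ
    F⁻¹ = (ψ * (1 - ψ)) • (P * Xi⁻¹ * P) := by
  intro T S F
  have hc : ψ * (1 - ψ) ≠ 0 := mul_ne_zero hψ.1.ne' (sub_ne_zero.mpr hψ.2.ne')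
  have hdetT : T.det = ψ * (1 - ψ) := by
    simp only [T, det_fin_two_of]
    ring
  have hF : F = (ψ * (1 - ψ))⁻¹ • (P⁻¹ * Xi * P⁻¹) := by
    have hT : IsUnit T.det := hdetT ▸ hc.isUnit
    have hsandwich : F = S * ((T ⊗ₖ P)⁻¹ * (T ⊗ₖ Xi) * (T ⊗ₖ P)⁻¹) * Sᵀ := by
      simp only [F, Matrix.mul_assoc]
    have hS : S = blockSelection (Fin p) ℝ 1 := rfl
    rw [hsandwich, hS, kronecker_inv_mul_kronecker_mul_kronecker_inv hT,
      blockSelection_mul_kronecker_mul_transpose, inv_fin_two_one_one, hdetT]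
    simp [T]
  rw [hF, inv_smul_inv_mul_mul_inv hc hP hXi]

/-- The sandwich variance reduces to closed form: with P(ψ) = T ⊗ P, Ξ(ψ) = T ⊗ Ξ,
T = [1, 1−ψ; 1−ψ, 1−ψ], and S the selection of the second block,
F(ψ) = S·P(ψ)⁻¹·Ξ(ψ)·P(ψ)⁻¹·S' satisfies F(ψ)⁻¹ = ψ(1−ψ)·P·Ξ⁻¹·P. -/
theorem sandwich_variance_closed_form {p : ℕ}
    (P Xi : Matrix (Fin p) (Fin p) ℝ)
    (hP : IsUnit P.det) (hXi : IsUnit Xi.det)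
    (hPsymm : P.IsSymm) (hXisymm : Xi.IsSymm)
    {ψ : ℝ} (hψ : ψ ∈ Set.Ioo (0:ℝ) 1) :
    let T : Matrix (Fin 2) (Fin 2) ℝ := !![1, 1 - ψ; 1 - ψ, 1 - ψ]
    let S : Matrix (Fin p) (Fin 2 × Fin p) ℝ :=
      Matrix.of fun i jk => if jk = ((1 : Fin 2), i) then 1 else 0
    let F : Matrix (Fin p) (Fin p) ℝ := S * (T ⊗ₖ P)⁻¹ * (T ⊗ₖ Xi) * (T ⊗ₖ P)⁻¹ * Sᵀ
    F⁻¹ = (ψ * (1 - ψ)) • (P * Xi⁻¹ * P) :=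
  sandwich_variance_closed_form_general P Xi hP hXi hψ
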